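/- arXiv:1507.05240 — 10 statements merged into one kernel-verified Lean document; each statement's English description precedes it below -/
import Mathlib

section
/- Let G=(V,E) be a finite directed graph with source node r and at least two vertices, let c : E → ℝ with c_e ≥ 0 be edge capacities, and let S ⊆ {0,1}^E be a finite nonempty activation set. Let s : ℕ → S be any sequence of activation vectors and let R : V → ℕ → ℝ be any nonnegative functions satisfying the cut-set bound R_i(T) ≤ Σ_{t=0}^{T−1} Σ_{e∈E_U} c_e·s_e(t) for every proper cut U, every node i ∉ U, and every T ≥ 1. Then min_{i∈V} liminf_{T→∞} R_i(T)/T ≤ max_{β∈conv(S)} min_{U proper cut} Σ_{e∈E_U} c_e·β_e. -/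
/-!
Average the activation vectors over the first `T` slots. These averages lie in the compact set
`conv(S)`, so they have a cluster point `β ∈ conv(S)`. The cut-set bound says that `R_i(T) / T` is
at most the capacity of any proper cut `U ∌ i` under the average activation, and capacity is linear
and continuous in the activation vector; along times where the averages approach `β` this gives
`liminf_T R_i(T) / T ≤ (capacity of U under β)`. Taking the minimum over cuts, the left-hand side
is bounded by the min-cut value of `β`, one of the values whose supremum is the right-hand side.
-/

open Filter Finset

theorem Filter.liminf_le_of_mapClusterPt {ι X : Type*} [TopologicalSpace X] {l : Filter ι}
    {x : ι → X} {β : X} (hβ : MapClusterPt β l x) {f : X → ℝ} (hf : ContinuousAt f β)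
    {u : ι → ℝ} (hu : IsBoundedUnder (· ≥ ·) l u) (hle : ∀ᶠ k in l, u k ≤ f (x k)) :
    liminf u l ≤ f β := by
  refine le_of_forall_gt_imp_ge_of_dense fun b hb => liminf_le_of_frequently_le ?_ hu
  have hfreq : ∃ᶠ k in l, f (x k) < b := (hβ.tendsto_comp hf).frequently (Iio_mem_nhds hb)
  exact (hfreq.and_eventually hle).mono fun k ⟨hfb, hk⟩ => hk.trans hfb.le

theorem Finset.inv_card_smul_sum_mem_convexHull {ι M : Type*} [AddCommGroup M] [Module ℝ M]
    {t : Finset ι} (ht : t.Nonempty) {z : ι → M} {s : Set M} (hz : ∀ i ∈ t, z i ∈ s) :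
    (#t : ℝ)⁻¹ • ∑ i ∈ t, z i ∈ convexHull ℝ s := by
  simpa [Finset.centerMass] using
    t.centerMass_mem_convexHull (w := fun _ => (1 : ℝ)) (fun _ _ => zero_le_one)
      (by simpa using ht) hz

theorem liminf_div_le_of_mapClusterPt_average {M : Type*} [AddCommGroup M] [Module ℝ M]
    [TopologicalSpace M] {s : ℕ → M} {β : M}
    (hβ : MapClusterPt β atTop fun T : ℕ => (T : ℝ)⁻¹ • ∑ t ∈ range T, s t)
    {f : M →ₗ[ℝ] ℝ} (hf : ContinuousAt f β) {u : ℕ → ℝ} (hu₀ : ∀ T, 0 ≤ u T)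
    (hu : ∀ᶠ T in atTop, u T ≤ ∑ t ∈ range T, f (s t)) :
    liminf (fun T : ℕ => u T / T) atTop ≤ f β := by
  refine liminf_le_of_mapClusterPt hβ hf
    (isBoundedUnder_of_eventually_ge (.of_forall fun T => div_nonneg (hu₀ T) T.cast_nonneg))
    (hu.mono fun T hT => ?_)
  rw [map_smul, map_sum, smul_eq_mul, ← div_eq_inv_mul]
  exact div_le_div_of_nonneg_right hT T.cast_nonneg

section Cuts

variable {V : Type*} [DecidableEq V] (E : Finset (V × V)) (c : V × V → ℝ)

def cutCapacity (U : Finset V) (β : V × V → ℝ) : ℝ :=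
  ∑ e ∈ E.filter (fun e => e.1 ∈ U ∧ e.2 ∉ U), c e * β e

def cutCapacityₗ (U : Finset V) : (V × V → ℝ) →ₗ[ℝ] ℝ where
  toFun := cutCapacity E c U
  map_add' β γ := by simp only [cutCapacity, Pi.add_apply, mul_add, sum_add_distrib]
  map_smul' a β := by simp only [cutCapacity, Pi.smul_apply, smul_eq_mul, mul_sum, mul_left_comm,
    RingHom.id_apply]

theorem continuous_cutCapacity (U : Finset V) : Continuous (cutCapacity E c U) :=
  continuous_finsetSum _ fun e _ => continuous_const.mul (continuous_apply e)

variable [Fintype V]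

noncomputable def minCutCapacity (r : V) (β : V × V → ℝ) : ℝ :=
  sInf {y | ∃ U : Finset V, r ∈ U ∧ U ≠ univ ∧ y = cutCapacity E c U β}

variable {E c}

theorem minCutCapacity_le {r : V} {U : Finset V} (hrU : r ∈ U) (hU : U ≠ univ)
    (β : V × V → ℝ) : minCutCapacity E c r β ≤ cutCapacity E c U β := by
  have hfin : {y | ∃ U : Finset V, r ∈ U ∧ U ≠ univ ∧ y = cutCapacity E c U β}.Finite :=
    (Set.finite_range fun U : Finset V => cutCapacity E c U β).subset
      (by rintro _ ⟨U, -, -, rfl⟩; exact ⟨U, rfl⟩)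
  exact csInf_le hfin.bddBelow ⟨U, hrU, hU, rfl⟩

variable [Nontrivial V]

theorem le_minCutCapacity {r : V} {a : ℝ} {β : V × V → ℝ}
    (h : ∀ U : Finset V, r ∈ U → U ≠ univ → a ≤ cutCapacity E c U β) :
    a ≤ minCutCapacity E c r β := by
  refine le_csInf ⟨_, {r}, mem_singleton_self r, singleton_ne_univ r, rfl⟩ ?_
  rintro _ ⟨U, hrU, hU, rfl⟩
  exact h U hrU hU

variable (E c) in
theorem IsCompact.bddAbove_minCutCapacity_image {K : Set (V × V → ℝ)} (hK : IsCompact K)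
    (r : V) : BddAbove (minCutCapacity E c r '' K) := by
  obtain ⟨C, hC⟩ := (hK.image (continuous_cutCapacity E c {r})).bddAbove
  refine ⟨C, ?_⟩
  rintro _ ⟨β, hβ, rfl⟩
  exact (minCutCapacity_le (mem_singleton_self r) (singleton_ne_univ r) β).trans
    (hC ⟨β, hβ, rfl⟩)

end Cuts

theorem stmt_0_general {V : Type*} [Fintype V] [DecidableEq V] (r : V)
    (hV : 2 ≤ Fintype.card V)
    (E : Finset (V × V)) (c : V × V → ℝ)
    (S : Finset ((V × V) → ℝ))
    (s : ℕ → (V × V) → ℝ) (hs : ∀ t, s t ∈ S)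
    (R : V → ℕ → ℝ) (hR : ∀ i T, 0 ≤ R i T)
    (hcut : ∀ U : Finset V, r ∈ U → U ≠ Finset.univ →
      ∀ i ∉ U, ∀ T : ℕ, 1 ≤ T →
        R i T ≤ ∑ t ∈ Finset.range T,
          ∑ e ∈ E.filter (fun e => e.1 ∈ U ∧ e.2 ∉ U), c e * s t e) :
    sInf {x : ℝ | ∃ i : V, x = liminf (fun T : ℕ => R i T / T) atTop} ≤
      sSup {x : ℝ | ∃ β ∈ convexHull ℝ (S : Set ((V × V) → ℝ)),
        x = sInf {y : ℝ | ∃ U : Finset V, r ∈ U ∧ U ≠ Finset.univ ∧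
          y = ∑ e ∈ E.filter (fun e => e.1 ∈ U ∧ e.2 ∉ U), c e * β e}} := by
  have : Nontrivial V := Fintype.one_lt_card_iff_nontrivial.1 hV
  have hK : IsCompact (convexHull ℝ (S : Set ((V × V) → ℝ))) :=
    S.finite_toSet.isCompact_convexHull ℝ
  have havg : ∀ᶠ T : ℕ in atTop,
      (T : ℝ)⁻¹ • ∑ t ∈ range T, s t ∈ convexHull ℝ (S : Set ((V × V) → ℝ)) :=
    (eventually_ge_atTop 1).mono fun T hT => by
      simpa using inv_card_smul_sum_mem_convexHull (nonempty_range_iff.2 (by omega))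
        fun t _ => subset_convexHull ℝ _ (hs t)
  obtain ⟨β, hβK, hβ⟩ := hK.exists_mapClusterPt (tendsto_principal.2 havg)
  refine le_trans ?_ (le_csSup (a := minCutCapacity E c r β)
    ((hK.bddAbove_minCutCapacity_image E c r).mono ?_) ⟨β, hβK, rfl⟩)
  · refine le_minCutCapacity fun U hrU hU => ?_
    obtain ⟨i, hi⟩ : ∃ i, i ∉ U := by simpa [eq_univ_iff_forall] using hU
    have hfin : {x : ℝ | ∃ i : V, x = liminf (fun T : ℕ => R i T / T) atTop}.Finite :=
      (Set.finite_range fun i => liminf (fun T : ℕ => R i T / T) atTop).subset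
        (by rintro _ ⟨i, rfl⟩; exact ⟨i, rfl⟩)
    calc _ ≤ liminf (fun T : ℕ => R i T / T) atTop := csInf_le hfin.bddBelow ⟨i, rfl⟩
      _ ≤ cutCapacityₗ E c U β :=
        liminf_div_le_of_mapClusterPt_average hβ (continuous_cutCapacity E c U).continuousAt
          (hR i) ((eventually_ge_atTop 1).mono (hcut U hrU hU i hi))
  · rintro _ ⟨β', hβ', rfl⟩
    exact ⟨β', hβ', rfl⟩

/-- cut-set upper bound on the broadcast rate (Theorem 1 of the paper,
deterministic per-sample-path form). -/
theorem stmt_0 {V : Type*} [Fintype V] [DecidableEq V] (r : V)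
    (hV : 2 ≤ Fintype.card V)
    (E : Finset (V × V)) (c : V × V → ℝ) (hc : ∀ e, 0 ≤ c e)
    (S : Finset ((V × V) → ℝ)) (hS : S.Nonempty)
    (hSbin : ∀ s ∈ S, ∀ e, s e = 0 ∨ s e = 1)
    (s : ℕ → (V × V) → ℝ) (hs : ∀ t, s t ∈ S)
    (R : V → ℕ → ℝ) (hR : ∀ i T, 0 ≤ R i T)
    (hcut : ∀ U : Finset V, r ∈ U → U ≠ Finset.univ →
      ∀ i ∉ U, ∀ T : ℕ, 1 ≤ T →
        R i T ≤ ∑ t ∈ Finset.range T,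
          ∑ e ∈ E.filter (fun e => e.1 ∈ U ∧ e.2 ∉ U), c e * s t e) :
    sInf {x : ℝ | ∃ i : V, x = liminf (fun T : ℕ => R i T / T) atTop} ≤
      sSup {x : ℝ | ∃ β ∈ convexHull ℝ (S : Set ((V × V) → ℝ)),
        x = sInf {y : ℝ | ∃ U : Finset V, r ∈ U ∧ U ≠ Finset.univ ∧
          y = ∑ e ∈ E.filter (fun e => e.1 ∈ U ∧ e.2 ∉ U), c e * β e}} :=
  stmt_0_general r hV E c S s hs R hR hcut
end

section
/- Let S be a finite nonempty subset of ℝ^n, let s : ℕ → S be any sequence, and define the Cesàro averages ζ_T := (1/T) Σ_{t=0}^{T−1} s(t) for T ≥ 1. Then for any finite nonempty family of vectors u_1, …, u_m ∈ ℝ^n there exists β ∈ conv(S) such that min_{1≤j≤m} liminf_{T→∞} (u_j · ζ_T) = min_{1≤j≤m} (u_j · β). -/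
open Filter Finset Topology

/-!
Every Cesàro average of `s` lies in the compact set `conv(S)`. Pick `j₀` minimising
`liminf_T u_{j₀} · ζ_T`. Along the times where `u_{j₀} · ζ_T` is close to this liminf, the
averages have a cluster point `β ∈ conv(S)`, so `u_{j₀} · β` equals the liminf, while for every
`j` the cluster value `u_j · β` is at least `liminf_T u_j · ζ_T`. Taking minima gives the claim.
-/

lemma inv_natCast_smul_sum_range_mem_convexHull {𝕜 E : Type*} [Field 𝕜] [LinearOrder 𝕜]
    [IsStrictOrderedRing 𝕜] [AddCommGroup E] [Module 𝕜 E] {S : Set E} {s : ℕ → E}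
    (hs : ∀ t, s t ∈ S) {T : ℕ} (hT : T ≠ 0) :
    (T : 𝕜)⁻¹ • ∑ t ∈ range T, s t ∈ convexHull 𝕜 S := by
  rw [smul_sum]
  exact (convex_convexHull 𝕜 S).sum_mem (fun _ _ => by positivity) (by simp [hT])
    fun t _ => subset_convexHull 𝕜 S (hs t)

section ClusterPoints

variable {α X : Type*} [TopologicalSpace X] {l : Filter α} {ζ : α → X} {K : Set X}

lemma IsCompact.isBoundedUnder_ge_comp (hK : IsCompact K) (hζ : ∀ᶠ a in l, ζ a ∈ K)
    {f : X → ℝ} (hf : ContinuousOn f K) : IsBoundedUnder (· ≥ ·) l (f ∘ ζ) := by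
  obtain ⟨b, hb⟩ := (hK.image_of_continuousOn hf).bddBelow
  exact isBoundedUnder_of_eventually_ge (hζ.mono fun a ha => hb ⟨ζ a, ha, rfl⟩)

lemma IsCompact.isBoundedUnder_le_comp (hK : IsCompact K) (hζ : ∀ᶠ a in l, ζ a ∈ K)
    {f : X → ℝ} (hf : ContinuousOn f K) : IsBoundedUnder (· ≤ ·) l (f ∘ ζ) := by
  obtain ⟨b, hb⟩ := (hK.image_of_continuousOn hf).bddAbove
  exact isBoundedUnder_of_eventually_le (hζ.mono fun a ha => hb ⟨ζ a, ha, rfl⟩)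

lemma IsCompact.exists_mapClusterPt_apply_eq {Y : Type*} [TopologicalSpace Y] [T2Space Y]
    (hK : IsCompact K) (hζ : ∀ᶠ a in l, ζ a ∈ K) {f : X → Y} (hf : Continuous f) {y : Y}
    (hy : MapClusterPt y l (f ∘ ζ)) : ∃ β ∈ K, MapClusterPt β l ζ ∧ f β = y := by
  set F := l ⊓ comap (f ∘ ζ) (𝓝 y)
  have hF : NeBot F := by
    rw [← map_neBot_iff (f ∘ ζ), Filter.push_pull, inf_comm]
    exact hy
  obtain ⟨β, hβK, hβ : MapClusterPt β F ζ⟩ := hK.exists_clusterPt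
    (le_principal_iff.2 (mem_map.2 (mem_inf_of_left hζ)) : map ζ F ≤ 𝓟 K)
  have hfβ : MapClusterPt (f β) F (f ∘ ζ) := hβ.continuousAt_comp hf.continuousAt
  have hF_tendsto : map (f ∘ ζ) F ≤ 𝓝 y := tendsto_comap.mono_left inf_le_right
  exact ⟨β, hβK, hβ.mono inf_le_left, eq_of_nhds_neBot (hfβ.clusterPt.mono hF_tendsto)⟩

theorem IsCompact.exists_inf'_liminf_eq_inf' [NeBot l] (hK : IsCompact K)
    (hζ : ∀ᶠ a in l, ζ a ∈ K) {J : Type*} {s : Finset J} (hs : s.Nonempty) (f : J → X → ℝ)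
    (hf : ∀ j, Continuous (f j)) :
    ∃ β ∈ K, s.inf' hs (fun j => liminf (fun a => f j (ζ a)) l) = s.inf' hs fun j => f j β := by
  have hbdd_ge j := hK.isBoundedUnder_ge_comp hζ (hf j).continuousOn
  have hbdd_le j := hK.isBoundedUnder_le_comp hζ (hf j).continuousOn
  obtain ⟨j₀, hj₀s, hj₀⟩ := exists_mem_eq_inf' hs fun j => liminf (fun a => f j (ζ a)) l
  obtain ⟨β, hβK, hβ, hβj₀⟩ := hK.exists_mapClusterPt_apply_eq hζ (hf j₀)
    (MapClusterPt.liminf (hbdd_le j₀).isCoboundedUnder_ge (hbdd_ge j₀))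
  refine ⟨β, hβK, le_antisymm ?_ ?_⟩
  · exact le_inf' _ _ fun j hj => (inf'_le _ hj).trans
      ((hβ.continuousAt_comp (hf j).continuousAt).liminf_le (hbdd_ge j))
  · calc s.inf' hs (fun j => f j β) ≤ f j₀ β := inf'_le _ hj₀s
      _ = _ := hβj₀.trans hj₀.symm

end ClusterPoints

theorem stmt_1_general {n : ℕ} {J : Type*} [Fintype J] [Nonempty J]
    (S : Finset (Fin n → ℝ))
    (s : ℕ → Fin n → ℝ) (hs : ∀ t, s t ∈ S)
    (u : J → Fin n → ℝ) :
    ∃ β ∈ convexHull ℝ (S : Set (Fin n → ℝ)),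
      (Finset.univ.inf' Finset.univ_nonempty fun j =>
        liminf (fun T : ℕ =>
          ∑ i, u j i * ((∑ t ∈ Finset.range T, s t i) / T)) atTop)
      = Finset.univ.inf' Finset.univ_nonempty fun j => ∑ i, u j i * β i := by
  have hζ : ∀ᶠ T : ℕ in atTop,
      (fun i => (∑ t ∈ range T, s t i) / T) ∈ convexHull ℝ (S : Set (Fin n → ℝ)) := by
    filter_upwards [eventually_ne_atTop 0] with T hT
    convert inv_natCast_smul_sum_range_mem_convexHull (𝕜 := ℝ) hs hT using 1
    ext i
    simp [div_eq_inv_mul]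
  exact (S.finite_toSet.isCompact_convexHull ℝ).exists_inf'_liminf_eq_inf' hζ univ_nonempty
    (fun j x => ∑ i, u j i * x i) fun j => by fun_prop

/-- Cesàro averages of a sequence taking values in a finite set S ⊆ ℝⁿ can be
replaced, as far as a finite family of min-liminf dot products is concerned, by a single
point of conv(S) (Lemma 4 of the paper). -/
theorem stmt_1 {n : ℕ} {J : Type*} [Fintype J] [Nonempty J]
    (S : Finset (Fin n → ℝ)) (hS : S.Nonempty)
    (s : ℕ → Fin n → ℝ) (hs : ∀ t, s t ∈ S)
    (u : J → Fin n → ℝ) :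
    ∃ β ∈ convexHull ℝ (S : Set (Fin n → ℝ)),
      (Finset.univ.inf' Finset.univ_nonempty fun j =>
        liminf (fun T : ℕ =>
          ∑ i, u j i * ((∑ t ∈ Finset.range T, s t i) / T)) atTop)
      = Finset.univ.inf' Finset.univ_nonempty fun j => ∑ i, u j i * β i :=
  stmt_1_general S s hs u
end

section
/- Let G=(V,E) be a finite directed acyclic graph with a designated node r, at least two vertices, and nonnegative edge weights w : E → ℝ. Then the minimum over all proper cuts U of Σ_{e∈E_U} w_e equals the minimum over all vertices v ≠ r of Σ_{e∈δ_in(v)} w_e; that is, in a weighted DAG the minimum r-side cut value is attained by a cut of the form V \ {v} separating a single non-source node. -/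
open Finset

/-- in a weighted DAG with nonnegative weights, the minimum proper-cut value
equals the minimum over single-receiver cuts V \ {v}, v ≠ r (equations (15)/(35) of the
paper). -/
theorem stmt_3 {V : Type*} [Fintype V] [DecidableEq V] (r : V)
    (hV : 2 ≤ Fintype.card V)
    (E : Finset (V × V))
    (hacyc : ∀ v : V, ¬ Relation.TransGen (fun a b : V => (a, b) ∈ E) v v)
    (w : V × V → ℝ) (hw : ∀ e, 0 ≤ w e) :
    sInf {x : ℝ | ∃ U : Finset V, r ∈ U ∧ U ≠ Finset.univ ∧
        x = ∑ e ∈ E.filter (fun e => e.1 ∈ U ∧ e.2 ∉ U), w e}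
    = sInf {x : ℝ | ∃ v : V, v ≠ r ∧
        x = ∑ e ∈ E.filter (fun e => e.2 = v), w e} := by
  set rel : V → V → Prop := fun a b => (a, b) ∈ E with hrel
  have hwf : WellFounded rel := by
    have hti : IsIrrefl V (Relation.TransGen rel) := ⟨hacyc⟩
    have hwf' : WellFounded (Relation.TransGen rel) :=
      Finite.wellFounded_of_trans_of_irrefl _
    exact Subrelation.wf (fun {a b} h => Relation.TransGen.single h) hwf'
  set A := {x : ℝ | ∃ U : Finset V, r ∈ U ∧ U ≠ Finset.univ ∧
      x = ∑ e ∈ E.filter (fun e => e.1 ∈ U ∧ e.2 ∉ U), w e} with hA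
  set B := {x : ℝ | ∃ v : V, v ≠ r ∧
      x = ∑ e ∈ E.filter (fun e => e.2 = v), w e} with hB
  -- B ⊆ A
  have hBA : B ⊆ A := by
    rintro x ⟨v, hv, rfl⟩
    refine ⟨Finset.univ \ {v}, ?_, ?_, ?_⟩
    · simp [Ne.symm hv]
    · intro h
      have hvv : v ∈ Finset.univ \ {v} := by rw [h]; exact Finset.mem_univ v
      simp at hvv
    · congr 1
      apply Finset.filter_congr
      intro e he
      simp only [Finset.mem_sdiff, Finset.mem_univ, Finset.mem_singleton, true_and,
        not_not, eq_iff_iff]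
      constructor
      · intro h2
        refine ⟨?_, h2⟩
        intro h1
        apply hacyc v
        have hev : e = (v, v) := Prod.ext_iff.mpr ⟨h1, h2⟩
        exact Relation.TransGen.single (show (v, v) ∈ E from hev ▸ he)
      · rintro ⟨h1, h2⟩
        exact h2
  -- every element of A is ≥ some element of B
  have hkey : ∀ x ∈ A, ∃ y ∈ B, y ≤ x := by
    rintro x ⟨U, hrU, hUuniv, rfl⟩
    have hS : {v : V | v ∉ U}.Nonempty := by
      rw [Set.nonempty_iff_ne_empty]
      intro h
      apply hUuniv
      apply Finset.eq_univ_of_forall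
      intro v
      by_contra hv
      have hv' : v ∈ ({u : V | u ∉ U} : Set V) := hv
      rw [h] at hv'
      exact hv'
    obtain ⟨v, hv, hmin⟩ := hwf.has_min _ hS
    have hvr : v ≠ r := fun h => hv (h ▸ hrU)
    refine ⟨∑ e ∈ E.filter (fun e => e.2 = v), w e, ⟨v, hvr, rfl⟩, ?_⟩
    apply Finset.sum_le_sum_of_subset_of_nonneg
    · intro e he
      simp only [Finset.mem_filter] at he ⊢
      obtain ⟨heE, he2⟩ := he
      refine ⟨heE, ?_, he2 ▸ hv⟩
      by_contra h1
      exact hmin e.1 h1 (show rel e.1 v by rw [hrel]; subst he2; exact heE)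
    · intro e _ _
      exact hw e
  have hAne : A.Nonempty := by
    have : Nontrivial V := Fintype.one_lt_card_iff_nontrivial.mp hV
    obtain ⟨v, hv⟩ := exists_ne r
    exact ⟨_, hBA ⟨v, hv, rfl⟩⟩
  have hBne : B.Nonempty := by
    have : Nontrivial V := Fintype.one_lt_card_iff_nontrivial.mp hV
    obtain ⟨v, hv⟩ := exists_ne r
    exact ⟨_, v, hv, rfl⟩
  have hAbdd : BddBelow A := by
    refine ⟨0, ?_⟩
    rintro x ⟨U, _, _, rfl⟩
    exact Finset.sum_nonneg fun e _ => hw e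
  have hBbdd : BddBelow B := by
    refine ⟨0, ?_⟩
    rintro x ⟨v, _, rfl⟩
    exact Finset.sum_nonneg fun e _ => hw e
  apply le_antisymm
  · exact csInf_le_csInf hAbdd hBne hBA
  · apply le_csInf hAne
    intro x hx
    obtain ⟨y, hyB, hyx⟩ := hkey x hx
    exact (csInf_le hBbdd hyB).trans hyx
end

section
/- Let G=(V,E) be a finite directed acyclic graph with source node r and at least two vertices, let c : E → ℝ with c_e ≥ 0 be edge capacities, and let S ⊆ {0,1}^E be a finite nonempty activation set. Then max_{β∈conv(S)} min_{U proper cut} Σ_{e∈E_U} c_e·β_e = max_{β∈conv(S)} min_{v≠r} Σ_{e∈δ_in(v)} c_e·β_e. -/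
open Finset

/-- for a wireless DAG, the max-min proper-cut characterization of the broadcast
capacity equals the max-min over the single-node cuts (equation (15) of the paper). -/
theorem stmt_4 {V : Type*} [Fintype V] [DecidableEq V] (r : V)
    (hV : 2 ≤ Fintype.card V)
    (E : Finset (V × V))
    (hacyc : ∀ v : V, ¬ Relation.TransGen (fun a b : V => (a, b) ∈ E) v v)
    (c : V × V → ℝ) (hc : ∀ e, 0 ≤ c e)
    (S : Finset ((V × V) → ℝ)) (hS : S.Nonempty)
    (hSbin : ∀ s ∈ S, ∀ e, s e = 0 ∨ s e = 1) :
    sSup {x : ℝ | ∃ β ∈ convexHull ℝ (S : Set ((V × V) → ℝ)),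
        x = sInf {y : ℝ | ∃ U : Finset V, r ∈ U ∧ U ≠ Finset.univ ∧
          y = ∑ e ∈ E.filter (fun e => e.1 ∈ U ∧ e.2 ∉ U), c e * β e}}
    = sSup {x : ℝ | ∃ β ∈ convexHull ℝ (S : Set ((V × V) → ℝ)),
        x = sInf {y : ℝ | ∃ v : V, v ≠ r ∧
          y = ∑ e ∈ E.filter (fun e => e.2 = v), c e * β e}} := by
  have hβnn : ∀ β ∈ convexHull ℝ (S : Set ((V × V) → ℝ)), ∀ e, 0 ≤ β e := by
    intro β hβ
    have hsub : (S : Set ((V × V) → ℝ)) ⊆ {f : (V × V) → ℝ | ∀ e, 0 ≤ f e} := by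
      intro s hs e
      rcases hSbin s hs e with h | h <;> simp [h]
    have hconv : Convex ℝ {f : (V × V) → ℝ | ∀ e, 0 ≤ f e} := by
      intro f hf g hg a b ha hb hab e
      exact add_nonneg (mul_nonneg ha (hf e)) (mul_nonneg hb (hg e))
    exact convexHull_min hsub hconv hβ
  have key : ∀ β : (V × V) → ℝ, (∀ e, 0 ≤ β e) →
      sInf {y : ℝ | ∃ U : Finset V, r ∈ U ∧ U ≠ Finset.univ ∧
          y = ∑ e ∈ E.filter (fun e => e.1 ∈ U ∧ e.2 ∉ U), c e * β e}
      = sInf {y : ℝ | ∃ v : V, v ≠ r ∧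
          y = ∑ e ∈ E.filter (fun e => e.2 = v), c e * β e} := by
    intro β hβ
    set A : Set ℝ := {y : ℝ | ∃ U : Finset V, r ∈ U ∧ U ≠ Finset.univ ∧
        y = ∑ e ∈ E.filter (fun e => e.1 ∈ U ∧ e.2 ∉ U), c e * β e} with hA
    set B : Set ℝ := {y : ℝ | ∃ v : V, v ≠ r ∧
        y = ∑ e ∈ E.filter (fun e => e.2 = v), c e * β e} with hB
    have hBA : B ⊆ A := by
      rintro y ⟨v, hv, rfl⟩
      refine ⟨Finset.univ.erase v, Finset.mem_erase.2 ⟨Ne.symm hv, Finset.mem_univ r⟩, ?_, ?_⟩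
      · intro h
        have hv' : v ∈ Finset.univ.erase v := by rw [h]; exact Finset.mem_univ v
        exact (Finset.mem_erase.1 hv').1 rfl
      · congr 1
        apply Finset.filter_congr
        intro e he
        constructor
        · intro h2
          have h1 : e.1 ≠ v := by
            intro h1
            refine hacyc v (Relation.TransGen.single ?_)
            have he' : (e.1, e.2) ∈ E := by simpa using he
            rw [h1, h2] at he'
            exact he'
          exact ⟨Finset.mem_erase.2 ⟨h1, Finset.mem_univ _⟩,
            fun h => (Finset.mem_erase.1 h).1 h2⟩
        · rintro ⟨h1, h2⟩
          by_contra h3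
          exact h2 (Finset.mem_erase.2 ⟨h3, Finset.mem_univ _⟩)
    have hBne : B.Nonempty := by
      obtain ⟨v, hv⟩ := Fintype.exists_ne_of_one_lt_card (by omega) r
      exact ⟨_, v, hv, rfl⟩
    have hAne : A.Nonempty := hBne.mono hBA
    have hAbdd : BddBelow A := by
      refine ⟨0, ?_⟩
      rintro y ⟨U, _, _, rfl⟩
      exact Finset.sum_nonneg fun e _ => mul_nonneg (hc e) (hβ e)
    have hBbdd : BddBelow B := hAbdd.mono hBA
    apply le_antisymm
    · exact csInf_le_csInf hAbdd hBne hBA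
    · apply le_csInf hAne
      rintro y ⟨U, hrU, hUne, rfl⟩
      have hWne : {v : V | v ∉ U}.Nonempty := by
        by_contra h
        push_neg at h
        simp only [Set.not_nonempty_iff_eq_empty, Set.eq_empty_iff_forall_notMem,
          Set.mem_setOf_eq, not_not] at h
        exact hUne (Finset.eq_univ_iff_forall.2 h)
      have hwf : WellFounded (fun a b : V => (a, b) ∈ E) := by
        letI : IsTrans V (Relation.TransGen (fun a b : V => (a, b) ∈ E)) :=
          ⟨fun a b c hab hbc => hab.trans hbc⟩
        letI : IsIrrefl V (Relation.TransGen (fun a b : V => (a, b) ∈ E)) := ⟨hacyc⟩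
        have hsub : Subrelation (fun a b : V => (a, b) ∈ E)
            (Relation.TransGen fun a b : V => (a, b) ∈ E) :=
          fun h => Relation.TransGen.single h
        exact hsub.wf (Finite.wellFounded_of_trans_of_irrefl _)
      obtain ⟨v, hvW, hmin⟩ := hwf.has_min {v : V | v ∉ U} hWne
      have hvr : v ≠ r := fun h => hvW (h ▸ hrU)
      have hsubset : E.filter (fun e => e.2 = v) ⊆ E.filter (fun e => e.1 ∈ U ∧ e.2 ∉ U) := by
        intro e he
        rw [Finset.mem_filter] at he ⊢
        obtain ⟨heE, hev⟩ := he
        refine ⟨heE, ?_, hev ▸ hvW⟩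
        by_contra h1
        exact hmin e.1 h1 (by rw [← hev]; simpa using heE)
      calc sInf B ≤ ∑ e ∈ E.filter (fun e => e.2 = v), c e * β e :=
            csInf_le hBbdd ⟨v, hvr, rfl⟩
        _ ≤ ∑ e ∈ E.filter (fun e => e.1 ∈ U ∧ e.2 ∉ U), c e * β e :=
            Finset.sum_le_sum_of_subset_of_nonneg hsubset
              (fun e _ _ => mul_nonneg (hc e) (hβ e))
  congr 1
  ext x
  simp only [Set.mem_setOf_eq]
  constructor
  · rintro ⟨β, hβ, rfl⟩
    exact ⟨β, hβ, key β (hβnn β hβ)⟩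
  · rintro ⟨β, hβ, rfl⟩
    exact ⟨β, hβ, (key β (hβnn β hβ)).symm⟩
end

section
/- Let G be a finite directed multigraph given by a vertex set V with |V| ≥ 2, a finite edge-index set E, and maps src, tgt : E → V (parallel edges allowed). Suppose G contains no directed cycle and every vertex is reachable from a designated root r ∈ V by a directed path. Call a subset T ⊆ E a spanning arborescence rooted at r if every vertex v ≠ r is the target of exactly one edge of T and every vertex of V is reachable from r using only edges of T. Then the maximum number k* of pairwise edge-disjoint spanning arborescences rooted at r satisfies k* = min_{v∈V, v≠r} d_in(v), where d_in(v) := |{e ∈ E : tgt(e) = v}| is the in-degree of v. -/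
open Finset

/-- DAG specialization of Edmonds' disjoint arborescence theorem (Lemma 3 of the
paper): in an acyclic directed multigraph rooted at r in which every vertex is reachable from
r, the maximum number of pairwise edge-disjoint spanning arborescences rooted at r equals the
minimum in-degree over the non-root vertices. -/
theorem stmt_5 {V E : Type*} [Fintype V] [DecidableEq V] [Fintype E] [DecidableEq E]
    (hV : 2 ≤ Fintype.card V)
    (src tgt : E → V) (r : V)
    (hacyc : ∀ v : V,
      ¬ Relation.TransGen (fun a b : V => ∃ e : E, src e = a ∧ tgt e = b) v v)
    (hreach : ∀ v : V,
      Relation.ReflTransGen (fun a b : V => ∃ e : E, src e = a ∧ tgt e = b) r v) :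
    IsGreatest
      {k : ℕ | ∃ T : Fin k → Finset E,
        (∀ l, (∀ v : V, v ≠ r → ∃! e : E, e ∈ T l ∧ tgt e = v) ∧
          (∀ v : V, Relation.ReflTransGen
            (fun a b : V => ∃ e ∈ T l, src e = a ∧ tgt e = b) r v)) ∧
        (∀ l l', l ≠ l' → Disjoint (T l) (T l'))}
      (sInf {d : ℕ | ∃ v : V, v ≠ r ∧
        d = (Finset.univ.filter (fun e : E => tgt e = v)).card}) := by
  classical
  set R : V → V → Prop := fun a b => ∃ e : E, src e = a ∧ tgt e = b with hRdef
  -- well-foundedness of the edge relation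
  have hwf : WellFounded R := by
    haveI : IsIrrefl V (Relation.TransGen R) := ⟨hacyc⟩
    exact Subrelation.wf (fun h => Relation.TransGen.single h)
      (Finite.wellFounded_of_trans_of_irrefl _)
  -- a non-root vertex exists
  obtain ⟨v0, hv0⟩ := Fintype.exists_ne_of_one_lt_card hV r
  have hDne : {d : ℕ | ∃ v : V, v ≠ r ∧
      d = (Finset.univ.filter (fun e : E => tgt e = v)).card}.Nonempty :=
    ⟨_, v0, hv0, rfl⟩
  set k := sInf {d : ℕ | ∃ v : V, v ≠ r ∧
      d = (Finset.univ.filter (fun e : E => tgt e = v)).card} with hkdef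
  have hk_le : ∀ v : V, v ≠ r →
      k ≤ (Finset.univ.filter (fun e : E => tgt e = v)).card :=
    fun v hv => Nat.sInf_le ⟨v, hv, rfl⟩
  -- E is nonempty
  have hEne : Nonempty E := by
    rcases (hreach v0).cases_tail with h | ⟨c, _, e, _, _⟩
    · exact absurd h hv0
    · exact ⟨e⟩
  -- select, for each non-root vertex, k distinct in-edges
  have hsel : ∀ v : V, ∃ f : Fin k → E,
      v ≠ r → Function.Injective f ∧ ∀ l, tgt (f l) = v := by
    intro v
    by_cases hv : v = r
    · exact ⟨fun _ => Classical.arbitrary E, fun h => absurd hv h⟩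
    · obtain ⟨t, hts, htc⟩ := Finset.exists_subset_card_eq (hk_le v hv)
      refine ⟨fun l => ((Finset.equivFinOfCardEq htc).symm l : E), fun _ => ⟨?_, ?_⟩⟩
      · intro l l' h
        have := Subtype.ext (p := (· ∈ t)) h
        simpa using (Finset.equivFinOfCardEq htc).symm.injective this
      · intro l
        have := hts ((Finset.equivFinOfCardEq htc).symm l).2
        simpa using (Finset.mem_filter.mp this).2
  choose f hf using hsel
  set T : Fin k → Finset E :=
    fun l => (Finset.univ.filter (· ≠ r)).image (fun v => f v l) with hTdef
  have memT : ∀ (l : Fin k) (e : E), e ∈ T l ↔ ∃ v : V, v ≠ r ∧ f v l = e := by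
    intro l e
    simp [hTdef]
  constructor
  · -- k is attained
    refine ⟨T, fun l => ⟨?_, ?_⟩, ?_⟩
    · intro v hv
      refine ⟨f v l, ⟨(memT l _).mpr ⟨v, hv, rfl⟩, (hf v hv).2 l⟩, ?_⟩
      rintro e' ⟨he', htgt'⟩
      obtain ⟨u, hu, rfl⟩ := (memT l e').mp he'
      have huv : u = v := by rw [← (hf u hu).2 l, htgt']
      subst huv; rfl
    · intro v
      induction v using hwf.induction with
      | _ v ih =>
        by_cases hv : v = r
        · subst hv; exact Relation.ReflTransGen.refl
        · have htgt := (hf v hv).2 l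
          have hmem : f v l ∈ T l := (memT l _).mpr ⟨v, hv, rfl⟩
          exact (ih (src (f v l)) ⟨f v l, rfl, htgt⟩).tail ⟨f v l, hmem, rfl, htgt⟩
    · intro l l' hll
      rw [Finset.disjoint_left]
      intro e he he'
      obtain ⟨u, hu, rfl⟩ := (memT l e).mp he
      obtain ⟨u', hu', he2⟩ := (memT l' _).mp he'
      have huu : u' = u := by rw [← (hf u' hu').2 l', he2, (hf u hu).2 l]
      subst huu
      exact hll ((hf u' hu').1 he2.symm)
  · -- k is an upper bound
    rintro k' ⟨T', hT', hdisj⟩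
    refine le_csInf hDne ?_
    rintro d ⟨v, hv, rfl⟩
    have hgl : ∀ l : Fin k', ∃ e : E, e ∈ T' l ∧ tgt e = v :=
      fun l => ((hT' l).1 v hv).exists
    choose g hg using hgl
    have hmaps : ∀ l ∈ (Finset.univ : Finset (Fin k')),
        g l ∈ Finset.univ.filter (fun e : E => tgt e = v) := by
      intro l _
      simp [(hg l).2]
    have hinj : Set.InjOn g (Finset.univ : Finset (Fin k')) := by
      intro l _ l' _ h
      by_contra hne
      exact (Finset.disjoint_left.mp (hdisj l l' hne) (hg l).1) (h ▸ (hg l').1)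
    have := Finset.card_le_card_of_injOn g hmaps hinj
    simpa using this
end

section
/- Fix a node j with a finite nonempty in-neighbor set In(j). Let R_i(t), R_i(t+1) for i ∈ In(j) ∪ {j} be real numbers such that: for every i ∈ In(j), R_i(t) ≤ R_i(t+1) ≤ R_i(t) + a_i with a_i ≥ 0; X_j(t) := min_{i∈In(j)} (R_i(t) − R_j(t)) ≥ 0; and R_j(t+1) = R_j(t) + min(μ, X_j(t)) for some μ ≥ 0. Let i* ∈ In(j) be any minimizer of R_i(t) − R_j(t). Then X_j(t+1) := min_{i∈In(j)} (R_i(t+1) − R_j(t+1)) satisfies X_j(t+1) ≤ (X_j(t) − μ)⁺ + a_{i*}, where (x)⁺ := max(x,0). -/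
open Finset

/-- the one-slot evolution bound for the minimum packet deficit X_j
(equation (12) of the paper). -/
theorem stmt_7 {ι : Type*} [Fintype ι] [Nonempty ι]
    (Rt Rt1 a : ι → ℝ) (Rj Rj1 μ : ℝ)
    (ha : ∀ i, 0 ≤ a i)
    (hmono : ∀ i, Rt i ≤ Rt1 i) (hbound : ∀ i, Rt1 i ≤ Rt i + a i)
    (hX : 0 ≤ Finset.univ.inf' Finset.univ_nonempty fun i => Rt i - Rj)
    (hμ : 0 ≤ μ)
    (hRj1 : Rj1 = Rj + min μ (Finset.univ.inf' Finset.univ_nonempty fun i => Rt i - Rj))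
    (istar : ι) (histar : ∀ i, Rt istar - Rj ≤ Rt i - Rj) :
    (Finset.univ.inf' Finset.univ_nonempty fun i => Rt1 i - Rj1)
      ≤ max ((Finset.univ.inf' Finset.univ_nonempty fun i => Rt i - Rj) - μ) 0 + a istar := by
  set X := Finset.univ.inf' Finset.univ_nonempty fun i => Rt i - Rj with hXdef
  have hXstar : X = Rt istar - Rj := le_antisymm
    (Finset.inf'_le _ (Finset.mem_univ istar))
    (Finset.le_inf' _ _ fun i _ => histar i)
  have h1 : (Finset.univ.inf' Finset.univ_nonempty fun i => Rt1 i - Rj1)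
      ≤ Rt1 istar - Rj1 := Finset.inf'_le _ (Finset.mem_univ istar)
  have h2 : Rt1 istar - Rj1 ≤ X - min μ X + a istar := by
    rw [hRj1]
    have := hbound istar
    rw [hXstar]; linarith
  have h3 : X - min μ X = max (X - μ) 0 := by
    rcases le_total μ X with h | h
    · rw [min_eq_left h, max_eq_left (by linarith)]
    · rw [min_eq_right h, max_eq_right (by linarith)]; ring
  linarith
end

section
/- Consider the wired network with nodes {r,a,b,c} and unit-capacity directed edges (r,a), (r,b), (r,c), (a,b), (b,c), (c,a). For each edge e let f_e : ℕ → {0,1} indicate whether a new (non-duplicate) packet is forwarded over e in slot t, and let R_v : ℕ → ℝ for v ∈ {a,b,c} satisfy the counting bound R_v(T) ≤ Σ_{t=0}^{T−1} Σ_{e∈δ_in(v)} f_e(t) for all T ≥ 1, where δ_in(a) = {(r,a),(c,a)}, δ_in(b) = {(r,b),(a,b)}, δ_in(c) = {(r,c),(b,c)}. Suppose the in-order forwarding constraint holds: for each cycle edge (u,v) ∈ {(a,b),(b,c),(c,a)}, f_{(u,v)}(t) = 1 implies R_u(t) > R_v(t). Then min_{v∈{a,b,c}} liminf_{T→∞}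 R_v(T)/T ≤ 5/3. -/
open Filter Finset

lemma liminf_aux (u : ℕ → ℝ) (h : ∃ᶠ T in atTop, u T ≤ 5 / 3) :
    liminf u atTop ≤ 5 / 3 := by
  by_cases hb : IsBoundedUnder (· ≥ ·) atTop u
  · exact liminf_le_of_frequently_le h hb
  · rw [liminf_eq]
    have he : {a : ℝ | ∀ᶠ n in atTop, a ≤ u n} = ∅ := by
      ext a
      simp only [Set.mem_setOf_eq, Set.mem_empty_iff_false, iff_false]
      intro ha
      exact hb ⟨a, ha⟩
    rw [he, Real.sSup_empty]
    norm_num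

/-- on the 4-node wired network r,a,b,c with unit-capacity edges
(r,a),(r,b),(r,c),(a,b),(b,c),(c,a), any in-order forwarding scheme delivers distinct packets
to some node at a long-run rate of at most 5/3 (quantitative core of Lemma 1 of the paper). -/
theorem stmt_10
    (f_ra f_rb f_rc f_ab f_bc f_ca : ℕ → ℝ)
    (hbin : ∀ t : ℕ,
      (f_ra t = 0 ∨ f_ra t = 1) ∧ (f_rb t = 0 ∨ f_rb t = 1) ∧ (f_rc t = 0 ∨ f_rc t = 1) ∧
      (f_ab t = 0 ∨ f_ab t = 1) ∧ (f_bc t = 0 ∨ f_bc t = 1) ∧ (f_ca t = 0 ∨ f_ca t = 1))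
    (Ra Rb Rc : ℕ → ℝ)
    (hRa : ∀ T : ℕ, 1 ≤ T → Ra T ≤ ∑ t ∈ Finset.range T, (f_ra t + f_ca t))
    (hRb : ∀ T : ℕ, 1 ≤ T → Rb T ≤ ∑ t ∈ Finset.range T, (f_rb t + f_ab t))
    (hRc : ∀ T : ℕ, 1 ≤ T → Rc T ≤ ∑ t ∈ Finset.range T, (f_rc t + f_bc t))
    (hab : ∀ t : ℕ, f_ab t = 1 → Rb t < Ra t)
    (hbc : ∀ t : ℕ, f_bc t = 1 → Rc t < Rb t)
    (hca : ∀ t : ℕ, f_ca t = 1 → Ra t < Rc t) :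
    min (min (liminf (fun T : ℕ => Ra T / T) atTop)
             (liminf (fun T : ℕ => Rb T / T) atTop))
        (liminf (fun T : ℕ => Rc T / T) atTop) ≤ 5 / 3 := by
  -- per-slot bound
  have hslot : ∀ t : ℕ,
      (f_ra t + f_ca t) + (f_rb t + f_ab t) + (f_rc t + f_bc t) ≤ 5 := by
    intro t
    obtain ⟨h1, h2, h3, h4, h5, h6⟩ := hbin t
    by_cases hA : f_ab t = 1
    · by_cases hB : f_bc t = 1
      · by_cases hC : f_ca t = 1
        · exact absurd ((hca t hC).trans ((hbc t hB).trans (hab t hA)))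
            (lt_irrefl _)
        · have hC0 : f_ca t = 0 := h6.resolve_right hC
          rcases h1 with h1 | h1 <;> rcases h2 with h2 | h2 <;>
            rcases h3 with h3 | h3 <;>
            rw [h1, h2, h3, hA, hB, hC0] <;> norm_num
      · have hB0 : f_bc t = 0 := h5.resolve_right hB
        rcases h1 with h1 | h1 <;> rcases h2 with h2 | h2 <;>
          rcases h3 with h3 | h3 <;> rcases h6 with h6 | h6 <;>
          rw [h1, h2, h3, hA, hB0, h6] <;> norm_num
    · have hA0 : f_ab t = 0 := h4.resolve_right hA
      rcases h1 with h1 | h1 <;> rcases h2 with h2 | h2 <;>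
        rcases h3 with h3 | h3 <;> rcases h5 with h5 | h5 <;>
        rcases h6 with h6 | h6 <;>
        rw [h1, h2, h3, hA0, h5, h6] <;> norm_num
  -- sum bound
  have hsum : ∀ T : ℕ, 1 ≤ T → Ra T + Rb T + Rc T ≤ 5 * T := by
    intro T hT
    have := add_le_add (add_le_add (hRa T hT) (hRb T hT)) (hRc T hT)
    calc Ra T + Rb T + Rc T
        ≤ (∑ t ∈ Finset.range T, (f_ra t + f_ca t)) +
          (∑ t ∈ Finset.range T, (f_rb t + f_ab t)) +
          (∑ t ∈ Finset.range T, (f_rc t + f_bc t)) := this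
      _ = ∑ t ∈ Finset.range T,
            ((f_ra t + f_ca t) + (f_rb t + f_ab t) + (f_rc t + f_bc t)) := by
          rw [← Finset.sum_add_distrib, ← Finset.sum_add_distrib]
      _ ≤ ∑ _t ∈ Finset.range T, (5 : ℝ) :=
          Finset.sum_le_sum fun t _ => hslot t
      _ = 5 * T := by simp [mul_comm]
  -- pointwise disjunction
  have hkey : ∀ T : ℕ, 1 ≤ T →
      Ra T / T ≤ 5 / 3 ∨ Rb T / T ≤ 5 / 3 ∨ Rc T / T ≤ 5 / 3 := by
    intro T hT
    by_contra h
    push_neg at h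
    obtain ⟨ha, hb, hc⟩ := h
    have hTpos : (0 : ℝ) < T := by exact_mod_cast hT
    have ha' : 5 / 3 * T < Ra T := (lt_div_iff₀ hTpos).1 ha
    have hb' : 5 / 3 * T < Rb T := (lt_div_iff₀ hTpos).1 hb
    have hc' : 5 / 3 * T < Rc T := (lt_div_iff₀ hTpos).1 hc
    have : 5 * (T : ℝ) < Ra T + Rb T + Rc T := by linarith
    linarith [hsum T hT]
  have hfreq : ∃ᶠ T in atTop,
      (Ra T / T ≤ 5 / 3 ∨ Rb T / T ≤ 5 / 3 ∨ Rc T / T ≤ 5 / 3) :=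
    (eventually_atTop.2 ⟨1, hkey⟩).frequently
  rw [frequently_or_distrib, frequently_or_distrib] at hfreq
  rcases hfreq with h | h | h
  · exact le_trans (le_trans (min_le_left _ _) (min_le_left _ _))
      (liminf_aux _ h)
  · exact le_trans (le_trans (min_le_left _ _) (min_le_right _ _))
      (liminf_aux _ h)
  · exact le_trans (min_le_right _ _) (liminf_aux _ h)
end

section
/- Let G=(V,E) be a finite directed graph with source node r, at least two vertices, and capacities c : E → ℝ with c_e ≥ 0. For k = 1,…,K let ≺_k be a strict linear order on V whose minimum element is r, and let E^k := {(a,b) ∈ E : a ≺_k b}. Let β^1,…,β^K : E → ℝ be nonnegative with β^k_e = 0 whenever e ∉ E^k and Σ_{k=1}^K β^k_e ≤ 1 for every e ∈ E. Then for every proper cut U: Σ_{e∈E_U} c_e ≥ Σ_{k=1}^K min_{v≠r} Σ_{e∈δ_in(v)} c_e·β^k_e. In particular, the minimum r-side cut value of G, which equals the broadcast capacity of the wired network G, is at least Σ_{k=1}^K min_{v≠r} Σ_{e∈δ_in(v)} c_e·β^k_e. -/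
open Finset

/-- a fractional packing of K embedded DAG classes lower-bounds every proper
cut of a wired network, hence lower-bounds the minimum r-side cut value, i.e. the broadcast
capacity (corollary of Theorem 4, Section VI of the paper). -/
theorem stmt_12 {V : Type*} [Fintype V] [DecidableEq V] (r : V)
    (hV : 2 ≤ Fintype.card V)
    (E : Finset (V × V)) (c : V × V → ℝ) (hc : ∀ e, 0 ≤ c e)
    (K : ℕ) (lt : Fin K → V → V → Prop)
    (hord : ∀ k, IsStrictTotalOrder V (lt k))
    (hmin : ∀ k, ∀ v : V, v ≠ r → lt k r v)
    (β : Fin K → (V × V) → ℝ)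
    (hβ : ∀ k e, 0 ≤ β k e)
    (hsupp : ∀ k, ∀ e ∈ E, ¬ lt k e.1 e.2 → β k e = 0)
    (hpack : ∀ e ∈ E, ∑ k, β k e ≤ 1) :
    (∀ U : Finset V, r ∈ U → U ≠ Finset.univ →
      ∑ k, sInf {y : ℝ | ∃ v : V, v ≠ r ∧
          y = ∑ e ∈ E.filter (fun e => e.2 = v), c e * β k e}
        ≤ ∑ e ∈ E.filter (fun e => e.1 ∈ U ∧ e.2 ∉ U), c e) ∧
    ∑ k, sInf {y : ℝ | ∃ v : V, v ≠ r ∧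
        y = ∑ e ∈ E.filter (fun e => e.2 = v), c e * β k e}
      ≤ sInf {x : ℝ | ∃ U : Finset V, r ∈ U ∧ U ≠ Finset.univ ∧
          x = ∑ e ∈ E.filter (fun e => e.1 ∈ U ∧ e.2 ∉ U), c e} := by
  classical
  obtain ⟨w₀, hw₀⟩ : ∃ v : V, v ≠ r := Fintype.exists_ne_of_one_lt_card (by omega) r
  set S : Fin K → Set ℝ := fun k => {y : ℝ | ∃ v : V, v ≠ r ∧
      y = ∑ e ∈ E.filter (fun e => e.2 = v), c e * β k e} with hSdef
  have hSfin : ∀ k, (S k).Finite := by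
    intro k
    have hsub : S k ⊆ (fun v : V => ∑ e ∈ E.filter (fun e => e.2 = v), c e * β k e) ''
        Set.univ := by
      rintro y ⟨v, hv, rfl⟩
      exact ⟨v, trivial, rfl⟩
    exact (Set.finite_univ.image _).subset hsub
  have hcut : ∀ U : Finset V, r ∈ U → U ≠ Finset.univ →
      ∑ k, sInf (S k) ≤ ∑ e ∈ E.filter (fun e => e.1 ∈ U ∧ e.2 ∉ U), c e := by
    intro U hrU hUne
    have hex : ∃ v : V, v ∉ U := by
      by_contra h
      push_neg at h
      exact hUne (Finset.eq_univ_iff_forall.mpr h)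
    have step1 : ∑ k, sInf (S k)
        ≤ ∑ k, ∑ e ∈ E.filter (fun e => e.1 ∈ U ∧ e.2 ∉ U), c e * β k e := by
      apply Finset.sum_le_sum
      intro k _
      haveI := hord k
      have hwf : WellFounded (lt k) := Finite.wellFounded_of_trans_of_irrefl (lt k)
      obtain ⟨v, hvU, hvmin⟩ := hwf.has_min {v : V | v ∉ U} hex
      have hvr : v ≠ r := fun h => hvU (h ▸ hrU)
      have h1 : sInf (S k) ≤ ∑ e ∈ E.filter (fun e => e.2 = v), c e * β k e :=
        csInf_le (hSfin k).bddBelow ⟨v, hvr, rfl⟩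
      have heq : ∑ e ∈ E.filter (fun e => e.2 = v), c e * β k e
          = ∑ e ∈ E.filter (fun e => e.2 = v ∧ e.1 ∈ U), c e * β k e := by
        refine (Finset.sum_subset ?_ ?_).symm
        · intro e he
          simp only [Finset.mem_filter] at he ⊢
          exact ⟨he.1, he.2.1⟩
        · intro e he hne
          simp only [Finset.mem_filter] at he hne
          have h1U : e.1 ∉ U := fun h => hne ⟨he.1, he.2, h⟩
          have : ¬ lt k e.1 e.2 := by
            rw [he.2]
            exact hvmin e.1 h1U
          rw [hsupp k e he.1 this, mul_zero]
      have h2 : ∑ e ∈ E.filter (fun e => e.2 = v ∧ e.1 ∈ U), c e * β k e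
          ≤ ∑ e ∈ E.filter (fun e => e.1 ∈ U ∧ e.2 ∉ U), c e * β k e := by
        apply Finset.sum_le_sum_of_subset_of_nonneg
        · intro e he
          simp only [Finset.mem_filter] at he ⊢
          exact ⟨he.1, he.2.2, he.2.1 ▸ hvU⟩
        · intro e _ _
          exact mul_nonneg (hc e) (hβ k e)
      exact h1.trans (heq ▸ h2)
    refine step1.trans ?_
    rw [Finset.sum_comm]
    apply Finset.sum_le_sum
    intro e he
    have heE : e ∈ E := (Finset.mem_filter.mp he).1
    rw [← Finset.mul_sum]
    calc c e * ∑ k, β k e ≤ c e * 1 :=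
          mul_le_mul_of_nonneg_left (hpack e heE) (hc e)
      _ = c e := mul_one _
  refine ⟨hcut, ?_⟩
  apply le_csInf
  · refine ⟨_, {r}, Finset.mem_singleton_self r, ?_, rfl⟩
    intro h
    exact hw₀ (Finset.mem_singleton.mp (h ▸ Finset.mem_univ w₀))
  · rintro x ⟨U, h1, h2, rfl⟩
    exact hcut U h1 h2
end

section
/- Let G=(V,E) be a finite directed acyclic graph with source node r and at least two vertices, let c : E → ℝ with c_e ≥ 0 be edge capacities, and let S ⊆ {0,1}^E be a finite nonempty activation set. Let s : ℕ → S be any sequence of activation vectors and let R : V → ℕ → ℝ be nonnegative functions satisfying the cut-set bound R_i(T) ≤ Σ_{t=0}^{T−1} Σ_{e∈E_U} c_e·s_e(t) for every proper cut U, every i ∉ U, and every T ≥ 1. Then min_{i∈V} liminf_{T→∞} R_i(T)/T ≤ max_{β∈conv(S)} min_{v≠r} Σ_{e∈δ_in(v)} c_e·β_e =: λ_DAG. -/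
/-!
Average the activation vectors over the first `T` slots. These running means lie in the
compact set `conv(S)`, so along a subsequence they converge to some `β ∈ conv(S)`. For `v ≠ r`
the cut `U = V \ {v}` has `E_U = δ_in(v)` (acyclicity excludes self-loops), so the cut-set bound
says that `R_v(T) / T` is at most the in-capacity of `v` under the running mean; passing to the
limit along the subsequence gives `liminf R_v(T) / T ≤ Σ_{e ∈ δ_in(v)} c_e β_e`. Choosing `v` to
minimise the right-hand side bounds the left-hand side of the theorem by the value of `β`, which is
at most `λ_DAG`.
-/

open Filter Finset Topology

noncomputable def runningMean {X : Type*} [AddCommMonoid X] [Module ℝ X] (x : ℕ → X) (n : ℕ) :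
    X :=
  (n + 1 : ℝ)⁻¹ • ∑ t ∈ range (n + 1), x t

theorem runningMean_mem_convexHull {X : Type*} [AddCommGroup X] [Module ℝ X] {K : Set X}
    {x : ℕ → X} (hx : ∀ t, x t ∈ K) (n : ℕ) : runningMean x n ∈ convexHull ℝ K := by
  rw [runningMean, smul_sum]
  refine (convex_convexHull ℝ K).sum_mem (fun _ _ => by positivity) ?_
    fun t _ => subset_convexHull ℝ K (hx t)
  rw [sum_const, card_range, nsmul_eq_mul]
  push_cast
  exact mul_inv_cancel₀ (by positivity)

theorem liminf_le_of_comp_le_of_tendsto {α ι β : Type*} [ConditionallyCompleteLinearOrder β]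
    [TopologicalSpace β] [OrderTopology β] [DenselyOrdered β] {f : Filter α} {l : Filter ι}
    [l.NeBot] {u : α → β} {φ : ι → α} {w : ι → β} {b : β}
    (hu : IsBoundedUnder (· ≥ ·) f u) (hφ : Tendsto φ l f) (huw : ∀ k, u (φ k) ≤ w k)
    (hw : Tendsto w l (𝓝 b)) : liminf u f ≤ b := by
  refine le_of_forall_gt_imp_ge_of_dense fun b' hb' => liminf_le_of_frequently_le ?_ hu
  have hev : ∀ᶠ k in l, u (φ k) ≤ b' :=
    (hw.eventually (gt_mem_nhds hb')).mono fun k hk => (huw k).trans hk.le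
  exact hφ.frequently hev.frequently

theorem liminf_div_le_of_le_sum_of_tendsto_runningMean {X : Type*} [AddCommGroup X]
    [Module ℝ X] [TopologicalSpace X] (ℓ : X →L[ℝ] ℝ) {x : ℕ → X} {R : ℕ → ℝ}
    (hR : ∀ T, 0 ≤ R T) (hRx : ∀ T, 1 ≤ T → R T ≤ ∑ t ∈ range T, ℓ (x t))
    {φ : ℕ → ℕ} (hφ : Tendsto φ atTop atTop) {β : X}
    (hβ : Tendsto (fun k => runningMean x (φ k)) atTop (𝓝 β)) :
    liminf (fun T : ℕ => R T / T) atTop ≤ ℓ β := by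
  refine liminf_le_of_comp_le_of_tendsto
    (isBoundedUnder_of ⟨0, fun T => div_nonneg (hR T) T.cast_nonneg⟩)
    ((tendsto_add_atTop_nat 1).comp hφ) (fun k => ?_) ((ℓ.continuous.tendsto β).comp hβ)
  have hmean : ℓ (runningMean x (φ k)) = (∑ t ∈ range (φ k + 1), ℓ (x t)) / (φ k + 1 : ℝ) := by
    rw [runningMean, map_smul, map_sum, smul_eq_mul, inv_mul_eq_div]
  simp only [Function.comp_apply, hmean, Nat.cast_add_one]
  gcongr
  exact hRx _ le_add_self

theorem finite_setOf_exists_eq {ι α : Type*} [Finite ι] (f : ι → α) :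
    {y | ∃ i, y = f i}.Finite :=
  (Set.finite_range f).subset <| by rintro _ ⟨i, rfl⟩; exact Set.mem_range_self i

theorem finite_setOf_exists_and_eq {ι α : Type*} [Finite ι] (p : ι → Prop) (f : ι → α) :
    {y | ∃ i, p i ∧ y = f i}.Finite :=
  (finite_setOf_exists_eq f).subset fun _ ⟨i, _, hi⟩ => ⟨i, hi⟩

theorem exists_csInf_setOf_exists_and_eq {ι α : Type*} [Finite ι]
    [ConditionallyCompleteLinearOrder α] {p : ι → Prop} (hp : ∃ i, p i) (f : ι → α) :
    ∃ i, p i ∧ sInf {y | ∃ i, p i ∧ y = f i} = f i := by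
  obtain ⟨i₀, hi₀⟩ := hp
  exact Set.Nonempty.csInf_mem (s := {y | ∃ i, p i ∧ y = f i}) ⟨f i₀, i₀, hi₀, rfl⟩
    (finite_setOf_exists_and_eq p f)

theorem bddAbove_setOf_csInf {ι X α : Type*} [Finite ι] [ConditionallyCompleteLinearOrder α]
    {K : Set X} {p : ι → Prop} {i₀ : ι} (hi₀ : p i₀) {F : X → ι → α}
    (hF : BddAbove ((F · i₀) '' K)) :
    BddAbove {x | ∃ β ∈ K, x = sInf {y | ∃ i, p i ∧ y = F β i}} := by
  obtain ⟨M, hM⟩ := hF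
  refine ⟨M, ?_⟩
  rintro _ ⟨β, hβ, rfl⟩
  exact csInf_le_of_le (finite_setOf_exists_and_eq p (F β)).bddBelow ⟨i₀, hi₀, rfl⟩
    (hM ⟨β, hβ, rfl⟩)

section Graph

variable {V : Type*} [DecidableEq V]

def inflow (E : Finset (V × V)) (c : V × V → ℝ) (v : V) : ((V × V) → ℝ) →L[ℝ] ℝ :=
  ∑ e ∈ E.filter (fun e => e.2 = v), c e • ContinuousLinearMap.proj e

theorem inflow_apply (E : Finset (V × V)) (c : V × V → ℝ) (v : V) (β : V × V → ℝ) :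
    inflow E c v β = ∑ e ∈ E.filter (fun e => e.2 = v), c e * β e := by
  simp [inflow]

theorem filter_leaving_erase_eq [Fintype V] {E : Finset (V × V)} (hloop : ∀ v, (v, v) ∉ E)
    (v : V) :
    E.filter (fun e => e.1 ∈ univ.erase v ∧ e.2 ∉ univ.erase v) = E.filter (fun e => e.2 = v) := by
  ext ⟨a, b⟩
  simp only [mem_filter, mem_erase, mem_univ, and_true, not_not]
  constructor
  · rintro ⟨he, -, rfl⟩
    exact ⟨he, rfl⟩
  · rintro ⟨he, rfl⟩
    exact ⟨he, fun hab => hloop a (hab ▸ he), rfl⟩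

theorem le_sum_inflow_of_cut_bound [Fintype V] {r : V} {E : Finset (V × V)}
    (hloop : ∀ v, (v, v) ∉ E)
    {c : V × V → ℝ} {s : ℕ → (V × V) → ℝ} {R : V → ℕ → ℝ}
    (hcut : ∀ U : Finset V, r ∈ U → U ≠ Finset.univ →
      ∀ i ∉ U, ∀ T : ℕ, 1 ≤ T →
        R i T ≤ ∑ t ∈ Finset.range T,
          ∑ e ∈ E.filter (fun e => e.1 ∈ U ∧ e.2 ∉ U), c e * s t e)
    {v : V} (hv : v ≠ r) (T : ℕ) (hT : 1 ≤ T) :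
    R v T ≤ ∑ t ∈ range T, inflow E c v (s t) := by
  have hr : r ∈ univ.erase v := mem_erase.2 ⟨hv.symm, mem_univ r⟩
  have hne : univ.erase v ≠ univ := fun h => by simpa [h] using (univ.erase v).notMem_erase v
  have h := hcut (univ.erase v) hr hne v (notMem_erase v univ) T hT
  rw [filter_leaving_erase_eq hloop] at h
  simpa only [inflow_apply] using h

end Graph

theorem stmt_13_general {V : Type*} [Fintype V] [DecidableEq V] (r : V)
    (hV : 2 ≤ Fintype.card V)
    (E : Finset (V × V))
    (hacyc : ∀ v : V, ¬ Relation.TransGen (fun a b : V => (a, b) ∈ E) v v)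
    (c : V × V → ℝ)
    (S : Finset ((V × V) → ℝ))
    (s : ℕ → (V × V) → ℝ) (hs : ∀ t, s t ∈ S)
    (R : V → ℕ → ℝ) (hR : ∀ i T, 0 ≤ R i T)
    (hcut : ∀ U : Finset V, r ∈ U → U ≠ Finset.univ →
      ∀ i ∉ U, ∀ T : ℕ, 1 ≤ T →
        R i T ≤ ∑ t ∈ Finset.range T,
          ∑ e ∈ E.filter (fun e => e.1 ∈ U ∧ e.2 ∉ U), c e * s t e) :
    sInf {x : ℝ | ∃ i : V, x = liminf (fun T : ℕ => R i T / T) atTop} ≤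
      sSup {x : ℝ | ∃ β ∈ convexHull ℝ (S : Set ((V × V) → ℝ)),
        x = sInf {y : ℝ | ∃ v : V, v ≠ r ∧
          y = ∑ e ∈ E.filter (fun e => e.2 = v), c e * β e}} := by
  simp only [← inflow_apply]
  have hloop : ∀ v, (v, v) ∉ E := fun v hv => hacyc v (.single hv)
  obtain ⟨v₀, hv₀⟩ := Fintype.exists_ne_of_one_lt_card hV r
  have hK : IsCompact (convexHull ℝ (S : Set ((V × V) → ℝ))) :=
    S.finite_toSet.isCompact_convexHull ℝ
  obtain ⟨β, hβ, φ, hφ, hlim⟩ := hK.tendsto_subseq (runningMean_mem_convexHull hs)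
  obtain ⟨v, hv, hmin⟩ :=
    exists_csInf_setOf_exists_and_eq (p := (· ≠ r)) ⟨v₀, hv₀⟩ (inflow E c · β)
  calc sInf {x : ℝ | ∃ i : V, x = liminf (fun T : ℕ => R i T / T) atTop}
      ≤ liminf (fun T : ℕ => R v T / T) atTop :=
        csInf_le (finite_setOf_exists_eq _).bddBelow ⟨v, rfl⟩
    _ ≤ inflow E c v β := liminf_div_le_of_le_sum_of_tendsto_runningMean _ (hR v)
        (le_sum_inflow_of_cut_bound hloop hcut hv) hφ.tendsto_atTop hlim
    _ = _ := hmin.symm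
    _ ≤ _ := le_csSup
        (bddAbove_setOf_csInf (p := (· ≠ r)) (F := fun β v => inflow E c v β) hv₀
          (hK.bddAbove_image (inflow E c v₀).continuous.continuousOn)) ⟨β, hβ, rfl⟩

/-- Theorem 1 combined with equation (15) of the paper: for a wireless DAG, the
minimum long-run reception rate of any policy is at most
λ_DAG = max_{β∈conv(S)} min_{v≠r} Σ_{e∈δ_in(v)} c_e β_e. -/
theorem stmt_13 {V : Type*} [Fintype V] [DecidableEq V] (r : V)
    (hV : 2 ≤ Fintype.card V)
    (E : Finset (V × V))
    (hacyc : ∀ v : V, ¬ Relation.TransGen (fun a b : V => (a, b) ∈ E) v v)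
    (c : V × V → ℝ) (hc : ∀ e, 0 ≤ c e)
    (S : Finset ((V × V) → ℝ)) (hS : S.Nonempty)
    (hSbin : ∀ s ∈ S, ∀ e, s e = 0 ∨ s e = 1)
    (s : ℕ → (V × V) → ℝ) (hs : ∀ t, s t ∈ S)
    (R : V → ℕ → ℝ) (hR : ∀ i T, 0 ≤ R i T)
    (hcut : ∀ U : Finset V, r ∈ U → U ≠ Finset.univ →
      ∀ i ∉ U, ∀ T : ℕ, 1 ≤ T →
        R i T ≤ ∑ t ∈ Finset.range T,
          ∑ e ∈ E.filter (fun e => e.1 ∈ U ∧ e.2 ∉ U), c e * s t e) :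
    sInf {x : ℝ | ∃ i : V, x = liminf (fun T : ℕ => R i T / T) atTop} ≤
      sSup {x : ℝ | ∃ β ∈ convexHull ℝ (S : Set ((V × V) → ℝ)),
        x = sInf {y : ℝ | ∃ v : V, v ≠ r ∧
          y = ∑ e ∈ E.filter (fun e => e.2 = v), c e * β e}} :=
  stmt_13_general r hV E hacyc c S s hs R hR hcut
end

section
/- Fix a node j with a finite nonempty in-neighbor set In(j). Let R_i(t), R_i(t+1) for i ∈ In(j) ∪ {j} be real numbers such that: for every i ∈ In(j), R_i(t) ≤ R_i(t+1) ≤ R_i(t) + a_i with a_i ≥ 0; X_j(t) := min_{i∈In(j)} (R_i(t) − R_j(t)) ≥ 0; and R_j(t+1) = R_j(t) + min(μ, X_j(t)) for some μ ≥ 0. Let i* ∈ In(j) be any minimizer of R_i(t) − R_j(t), and set X_j(t+1) := min_{i∈In(j)} (R_i(t+1) − R_j(t+1)). Then X_j(t+1)² − X_j(t)² ≤ μ² + a_{i*}² + 2·X_j(t)·(a_{i*} − μ). -/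
open Finset

/-- the one-slot quadratic drift bound for the virtual queue X_j
(equation (22) of the paper, deterministic per-slot form). -/
theorem stmt_14 {ι : Type*} [Fintype ι] [Nonempty ι]
    (Rt Rt1 a : ι → ℝ) (Rj Rj1 μ : ℝ)
    (ha : ∀ i, 0 ≤ a i)
    (hmono : ∀ i, Rt i ≤ Rt1 i) (hbound : ∀ i, Rt1 i ≤ Rt i + a i)
    (hX : 0 ≤ Finset.univ.inf' Finset.univ_nonempty fun i => Rt i - Rj)
    (hμ : 0 ≤ μ)
    (hRj1 : Rj1 = Rj + min μ (Finset.univ.inf' Finset.univ_nonempty fun i => Rt i - Rj))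
    (istar : ι) (histar : ∀ i, Rt istar - Rj ≤ Rt i - Rj) :
    (Finset.univ.inf' Finset.univ_nonempty fun i => Rt1 i - Rj1) ^ 2
        - (Finset.univ.inf' Finset.univ_nonempty fun i => Rt i - Rj) ^ 2
      ≤ μ ^ 2 + a istar ^ 2
        + 2 * (Finset.univ.inf' Finset.univ_nonempty fun i => Rt i - Rj) * (a istar - μ) := by
  set X := Finset.univ.inf' Finset.univ_nonempty fun i => Rt i - Rj with hXdef
  set X1 := Finset.univ.inf' Finset.univ_nonempty fun i => Rt1 i - Rj1 with hX1def
  have hXeq : X = Rt istar - Rj :=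
    le_antisymm (Finset.inf'_le _ (Finset.mem_univ istar))
      (Finset.le_inf' _ _ fun i _ => histar i)
  have hup : X1 ≤ X + a istar - min μ X := by
    have h1 : X1 ≤ Rt1 istar - Rj1 := Finset.inf'_le _ (Finset.mem_univ istar)
    have h2 := hbound istar
    rw [hRj1] at h1
    linarith
  have hlo : 0 ≤ X1 := by
    apply Finset.le_inf'
    intro i _
    have h1 := hmono i
    have h2 : X ≤ Rt i - Rj := Finset.inf'_le _ (Finset.mem_univ i)
    have h3 : min μ X ≤ X := min_le_right _ _
    rw [hRj1]
    linarith
  rcases le_total μ X with h | h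
  · rw [min_eq_left h] at hup
    nlinarith [ha istar, sq_nonneg X1, mul_le_mul hup hup hlo (by linarith)]
  · rw [min_eq_right h] at hup
    nlinarith [ha istar, sq_nonneg (μ - X), mul_le_mul hup hup hlo (by linarith)]
end
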